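/- arXiv:2108.00572 — 8 statements merged into one kernel-verified Lean document; each statement's English description precedes it below -/
import Mathlib

section
/- For the ellipse t²/σ² + σ²(ω − βt)² = C with β ≥ 0 fixed and C > 0 fixed, the slope tan θ of the line through the origin and the farthest point of the ellipse from the origin satisfies tan θ = 2β/(σ²(√(A²σ⁴ + 4β²) + Aσ²)) + β, where A = 1 + β² − 1/σ⁴, and this quantity tends to β as σ → +∞. -/
/-!
Write the ellipse as `Q(t, ω) = C` for the positive definite form
`Q = a t² + 2b tω + c ω²` with `a = 1/σ² + σ²β²`, `b = -σ²β`, `c = σ²`. If `λ` is its smaller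
eigenvalue, then `(a - λ) (Q - λ(t² + ω²)) = ((a - λ) t + b ω)²`, so `t² + ω² ≤ C/λ` on the
ellipse, with equality exactly on the eigenline `(a - λ) t + b ω = 0`. The farthest point
therefore has slope `(a - λ)/(σ²β)`, which `(R - Aσ²)(R + Aσ²) = 4β²` for
`R = √(A²σ⁴ + 4β²)` turns into `β + 2β/(σ²(R + Aσ²))`; the correction term is `O(σ⁻⁴)`.
-/

open Filter

def binaryQuadForm (a b c t ω : ℝ) : ℝ := a * t ^ 2 + 2 * b * t * ω + c * ω ^ 2

section QuadForm

variable {a b c l : ℝ}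

theorem sub_mul_binaryQuadForm_sub (hl : (a - l) * (c - l) = b ^ 2) (t ω : ℝ) :
    (a - l) * (binaryQuadForm a b c t ω - l * (t ^ 2 + ω ^ 2)) = ((a - l) * t + b * ω) ^ 2 := by
  unfold binaryQuadForm
  linear_combination ω ^ 2 * hl

theorem mul_sum_sq_le_binaryQuadForm (hal : 0 < a - l) (hl : (a - l) * (c - l) = b ^ 2)
    (t ω : ℝ) : l * (t ^ 2 + ω ^ 2) ≤ binaryQuadForm a b c t ω := by
  have h := sub_mul_binaryQuadForm_sub hl t ω
  have : 0 ≤ binaryQuadForm a b c t ω - l * (t ^ 2 + ω ^ 2) :=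
    nonneg_of_mul_nonneg_right (h ▸ sq_nonneg _) hal
  linarith

theorem binaryQuadForm_eq_mul_sum_sq_iff (hal : a - l ≠ 0) (hl : (a - l) * (c - l) = b ^ 2)
    (t ω : ℝ) :
    binaryQuadForm a b c t ω = l * (t ^ 2 + ω ^ 2) ↔ (a - l) * t + b * ω = 0 := by
  rw [← pow_eq_zero_iff two_ne_zero, ← sub_mul_binaryQuadForm_sub hl, mul_eq_zero,
    or_iff_right hal, sub_eq_zero]

theorem eigenline_of_isGreatest {C t₁ ω₁ : ℝ} (hC : 0 < C) (hl0 : 0 < l) (hal : 0 < a - l)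
    (hl : (a - l) * (c - l) = b ^ 2) (h₁ : binaryQuadForm a b c t₁ ω₁ = C)
    (hmax : IsGreatest {d : ℝ | ∃ t ω : ℝ, binaryQuadForm a b c t ω = C ∧ d = t ^ 2 + ω ^ 2}
      (t₁ ^ 2 + ω₁ ^ 2)) :
    (a - l) * t₁ + b * ω₁ = 0 := by
  set k := a - l
  have hn : 0 < l * (b ^ 2 + k ^ 2) := by positivity
  set s := Real.sqrt (C / (l * (b ^ 2 + k ^ 2)))
  have hs : l * (b ^ 2 + k ^ 2) * s ^ 2 = C := by
    rw [Real.sq_sqrt (by positivity)]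
    field_simp
  -- the point `s • (-b, k)` of the eigenline lies on the level set at distance² `C/l`
  have hwit : binaryQuadForm a b c (-b * s) (k * s) = l * ((-b * s) ^ 2 + (k * s) ^ 2) :=
    (binaryQuadForm_eq_mul_sum_sq_iff hal.ne' hl _ _).2 (by ring)
  have hfar : (-b * s) ^ 2 + (k * s) ^ 2 ≤ t₁ ^ 2 + ω₁ ^ 2 :=
    hmax.2 ⟨-b * s, k * s, by rw [hwit, ← hs]; ring, rfl⟩
  have hle := mul_sum_sq_le_binaryQuadForm hal hl t₁ ω₁
  refine (binaryQuadForm_eq_mul_sum_sq_iff hal.ne' hl _ _).1 (le_antisymm ?_ hle)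
  calc binaryQuadForm a b c t₁ ω₁ = l * ((-b * s) ^ 2 + (k * s) ^ 2) := by rw [h₁, ← hs]; ring
    _ ≤ l * (t₁ ^ 2 + ω₁ ^ 2) := by gcongr

end QuadForm

noncomputable def minEigenvalue (a b c : ℝ) : ℝ := (a + c - √((a - c) ^ 2 + 4 * b ^ 2)) / 2

theorem sub_minEigenvalue_mul_sub_minEigenvalue (a b c : ℝ) :
    (a - minEigenvalue a b c) * (c - minEigenvalue a b c) = b ^ 2 := by
  have h := Real.sq_sqrt (by positivity : 0 ≤ (a - c) ^ 2 + 4 * b ^ 2)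
  unfold minEigenvalue
  linear_combination (1 / 4 : ℝ) * h

section MinEigenvalue

variable {a b c : ℝ}

theorem minEigenvalue_lt_left (hb : b ≠ 0) : minEigenvalue a b c < a := by
  have : c - a < √((a - c) ^ 2 + 4 * b ^ 2) :=
    (le_abs_self _).trans_lt <| Real.lt_sqrt_of_sq_lt <| by
      rw [sq_abs]; nlinarith [sq_pos_of_ne_zero hb]
  unfold minEigenvalue
  linarith

theorem minEigenvalue_pos (ha : 0 < a) (hdet : b ^ 2 < a * c) : 0 < minEigenvalue a b c := by
  have hc : 0 < c := pos_of_mul_pos_right ((sq_nonneg b).trans_lt hdet) ha.le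
  have : √((a - c) ^ 2 + 4 * b ^ 2) < a + c :=
    (Real.sqrt_lt' (by positivity)).2 (by nlinarith)
  unfold minEigenvalue
  linarith

end MinEigenvalue

theorem ellipse_eq_binaryQuadForm {σ : ℝ} (hσ : σ ≠ 0) (β t ω : ℝ) :
    t ^ 2 / σ ^ 2 + σ ^ 2 * (ω - β * t) ^ 2
      = binaryQuadForm (1 / σ ^ 2 + σ ^ 2 * β ^ 2) (-(σ ^ 2 * β)) (σ ^ 2) t ω := by
  unfold binaryQuadForm
  field_simp
  ring

noncomputable def majorAxisSlope (β σ : ℝ) : ℝ :=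
  2 * β / (σ ^ 2 * (Real.sqrt ((1 + β ^ 2 - 1 / σ ^ 4) ^ 2 * σ ^ 4
    + 4 * β ^ 2) + (1 + β ^ 2 - 1 / σ ^ 4) * σ ^ 2)) + β

theorem sub_minEigenvalue_div_eq_majorAxisSlope {β σ : ℝ} (hβ : 0 < β) (hσ : 0 < σ) :
    let a := 1 / σ ^ 2 + σ ^ 2 * β ^ 2
    (a - minEigenvalue a (-(σ ^ 2 * β)) (σ ^ 2)) / (σ ^ 2 * β) = majorAxisSlope β σ := by
  intro a
  unfold minEigenvalue majorAxisSlope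
  set A := 1 + β ^ 2 - 1 / σ ^ 4
  have hdisc : (a - σ ^ 2) ^ 2 + 4 * (-(σ ^ 2 * β)) ^ 2 = A ^ 2 * σ ^ 4 + 4 * β ^ 2 := by
    simp only [a, A]
    field_simp
    ring
  have hAa : a - σ ^ 2 = 2 * σ ^ 2 * β ^ 2 - A * σ ^ 2 := by
    simp only [a, A]
    field_simp
    ring
  rw [hdisc]
  set R := √(A ^ 2 * σ ^ 4 + 4 * β ^ 2)
  rw [show a - (a + σ ^ 2 - R) / 2 = (a - σ ^ 2 + R) / 2 by ring, hAa]
  have hR : R ^ 2 = A ^ 2 * σ ^ 4 + 4 * β ^ 2 := Real.sq_sqrt (by positivity)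
  have hRA : 0 < R + A * σ ^ 2 := by
    have : |A * σ ^ 2| < R := Real.lt_sqrt_of_sq_lt <| by rw [sq_abs]; nlinarith
    linarith [neg_abs_le (A * σ ^ 2)]
  clear_value a A R
  rw [div_add' _ _ _ (by positivity), div_div, div_eq_div_iff (by positivity) (by positivity)]
  linear_combination σ ^ 2 * hR

theorem tendsto_majorAxisSlope_atTop (β : ℝ) : Tendsto (majorAxisSlope β) atTop (nhds β) := by
  -- `√(A²σ⁴ + 4β²) ≥ Aσ²` and `Aσ⁴ = (1 + β²)σ⁴ - 1`
  have hbound : ∀ᶠ σ : ℝ in atTop, 2 * (1 + β ^ 2) * σ ^ 4 - 2 ≤ σ ^ 2 *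
      (√((1 + β ^ 2 - 1 / σ ^ 4) ^ 2 * σ ^ 4 + 4 * β ^ 2) + (1 + β ^ 2 - 1 / σ ^ 4) * σ ^ 2) := by
    filter_upwards [eventually_gt_atTop 0] with σ hσ
    have hsqrt : (1 + β ^ 2 - 1 / σ ^ 4) * σ ^ 2
        ≤ √((1 + β ^ 2 - 1 / σ ^ 4) ^ 2 * σ ^ 4 + 4 * β ^ 2) :=
      Real.le_sqrt_of_sq_le (by nlinarith)
    calc 2 * (1 + β ^ 2) * σ ^ 4 - 2 = σ ^ 2 * (2 * ((1 + β ^ 2 - 1 / σ ^ 4) * σ ^ 2)) := by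
          field_simp
      _ ≤ _ := by gcongr; linarith
  have hlow : Tendsto (fun σ : ℝ => 2 * (1 + β ^ 2) * σ ^ 4 - 2) atTop atTop :=
    tendsto_atTop_add_const_right _ _ <|
      (tendsto_pow_atTop (by norm_num)).const_mul_atTop (by positivity)
  have hlim := ((tendsto_const_nhds (x := 2 * β)).div_atTop
    (tendsto_atTop_mono' _ hbound hlow)).add_const β
  rwa [zero_add] at hlim

/-- For the ellipse `t²/σ² + σ²(ω − βt)² = C` with `β > 0` and `C > 0`, the slope
`ω₁/t₁` of the line through the origin and the farthest point `(t₁, ω₁)` (with `t₁ > 0`)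
equals `2β/(σ²(√(A²σ⁴ + 4β²) + Aσ²)) + β` where `A = 1 + β² − 1/σ⁴`, and this quantity
tends to `β` as `σ → +∞`. -/
theorem ellipse_major_axis_slope (C β : ℝ) (hC : 0 < C) (hβ : 0 < β) :
    (∀ σ t₁ ω₁ : ℝ, 0 < σ → 0 < t₁ →
      t₁ ^ 2 / σ ^ 2 + σ ^ 2 * (ω₁ - β * t₁) ^ 2 = C →
      IsGreatest {d : ℝ | ∃ t ω : ℝ, t ^ 2 / σ ^ 2 + σ ^ 2 * (ω - β * t) ^ 2 = C ∧
          d = t ^ 2 + ω ^ 2} (t₁ ^ 2 + ω₁ ^ 2) →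
      ω₁ / t₁ = 2 * β / (σ ^ 2 * (Real.sqrt ((1 + β ^ 2 - 1 / σ ^ 4) ^ 2 * σ ^ 4
          + 4 * β ^ 2) + (1 + β ^ 2 - 1 / σ ^ 4) * σ ^ 2)) + β) ∧
    Filter.Tendsto (fun σ : ℝ =>
        2 * β / (σ ^ 2 * (Real.sqrt ((1 + β ^ 2 - 1 / σ ^ 4) ^ 2 * σ ^ 4
          + 4 * β ^ 2) + (1 + β ^ 2 - 1 / σ ^ 4) * σ ^ 2)) + β)
      Filter.atTop (nhds β) := by
  refine ⟨fun σ t₁ ω₁ hσ ht₁ hell hmax => ?_, tendsto_majorAxisSlope_atTop β⟩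
  simp_rw [ellipse_eq_binaryQuadForm hσ.ne'] at hell hmax
  set a := 1 / σ ^ 2 + σ ^ 2 * β ^ 2
  set l := minEigenvalue a (-(σ ^ 2 * β)) (σ ^ 2)
  have hl0 : 0 < l := minEigenvalue_pos (by positivity) (by simp only [a]; field_simp; nlinarith)
  have hal : 0 < a - l := sub_pos.2 (minEigenvalue_lt_left (neg_ne_zero.2 (by positivity)))
  have heig := eigenline_of_isGreatest hC hl0 hal
    (sub_minEigenvalue_mul_sub_minEigenvalue _ _ _) hell hmax
  change ω₁ / t₁ = majorAxisSlope β σ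
  rw [← sub_minEigenvalue_div_eq_majorAxisSlope hβ hσ, div_eq_div_iff ht₁.ne' (by positivity)]
  linear_combination -heig
end

section
/- For the ellipse t²/σ² + σ²(ω − βt)² = C with 0 < σ < 1 and β > 0, the slope tan θ of the major axis (i.e., ω₁/t₁ where (t₁,ω₁) maximizes t² + ω² on the ellipse with t₁ > 0) satisfies tan θ ≥ √(1/σ⁴ − 1). -/
/-!
Put `k = 1/σ⁴ - 1`. The slope `tan θ` is the positive root `(p + √(p² + 4β²))/(2β)` of
`β t² - p t - β`, where `p = β² + k`. At `t = √k` this quadratic equals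
`-(√k (k - β√k + β²) + β) < 0`, so `√k` lies below the positive root.
-/

open Real

theorem le_pos_root_of_quadratic_nonpos {a p c s : ℝ} (ha : 0 < a)
    (hs : a * s ^ 2 - p * s - c ≤ 0) :
    s ≤ (p + √(p ^ 2 + 4 * a * c)) / (2 * a) := by
  rw [le_div_iff₀ (by positivity), ← sub_le_iff_le_add']
  have hsq : (s * (2 * a) - p) ^ 2 ≤ p ^ 2 + 4 * a * c := by nlinarith
  exact (le_abs_self _).trans (abs_le_sqrt hsq)

theorem ellipse_slope_eq_pos_root {σ β A : ℝ} (hσ : σ ≠ 0) (hβ : β ≠ 0)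
    (hA : A = 1 + β ^ 2 - 1 / σ ^ 4) :
    2 * β / (σ ^ 2 * (√(A ^ 2 * σ ^ 4 + 4 * β ^ 2) + A * σ ^ 2)) + β =
      (β ^ 2 + (1 / σ ^ 4 - 1) + √((β ^ 2 + (1 / σ ^ 4 - 1)) ^ 2 + 4 * β * β)) / (2 * β) := by
  generalize hk : 1 / σ ^ 4 - 1 = k
  have hσk : σ ^ 4 * (k + 1) = 1 := by rw [← hk]; field_simp; ring
  have hk1 : 0 < k + 1 := pos_of_mul_pos_right (hσk ▸ one_pos) (by positivity)
  obtain rfl : A = β ^ 2 - k := by rw [hA, ← hk]; ring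
  set R := √((β ^ 2 + k) ^ 2 + 4 * β * β)
  have hR : R ^ 2 = (β ^ 2 + k) ^ 2 + 4 * β * β := sq_sqrt (by nlinarith)
  have hD : √((β ^ 2 - k) ^ 2 * σ ^ 4 + 4 * β ^ 2) = σ ^ 2 * R := by
    rw [← sqrt_sq (sq_nonneg σ), ← sqrt_mul (sq_nonneg _)]
    congr 1
    linear_combination (-4 * β ^ 2) * hσk
  have hRA : 0 < R + (β ^ 2 - k) := by
    have : (β ^ 2 - k) ^ 2 < R ^ 2 := by nlinarith [sq_pos_of_ne_zero hβ]
    linarith [(abs_lt_of_sq_lt_sq' this (sqrt_nonneg _)).1]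
  have hden : σ ^ 2 * (σ ^ 2 * R + (β ^ 2 - k) * σ ^ 2) ≠ 0 := by
    rw [show σ ^ 2 * (σ ^ 2 * R + (β ^ 2 - k) * σ ^ 2) = σ ^ 4 * (R + (β ^ 2 - k)) by ring]
    positivity
  rw [hD, div_add' _ _ _ hden, div_eq_div_iff hden (by simpa)]
  linear_combination (-σ ^ 4) * hR - 4 * β ^ 2 * hσk

theorem ellipse_slope_lower_bound_general (σ β : ℝ) (hσ0 : 0 < σ) (hσ1 : σ < 1)
    (hβ : 0 < β) (A : ℝ) (hA : A = 1 + β ^ 2 - 1 / σ ^ 4) :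
    Real.sqrt (1 / σ ^ 4 - 1) ≤
      2 * β / (σ ^ 2 * (Real.sqrt (A ^ 2 * σ ^ 4 + 4 * β ^ 2) + A * σ ^ 2)) + β := by
  have hk : 0 ≤ 1 / σ ^ 4 - 1 := by
    rw [sub_nonneg, le_div_iff₀ (by positivity), one_mul]
    exact pow_le_one₀ hσ0.le hσ1.le
  rw [ellipse_slope_eq_pos_root hσ0.ne' hβ.ne' hA]
  apply le_pos_root_of_quadratic_nonpos hβ
  have hs := sqrt_nonneg (1 / σ ^ 4 - 1)
  have hs2 := sq_sqrt hk
  nlinarith [mul_nonneg hs (sq_nonneg (√(1 / σ ^ 4 - 1) - β))]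

/-- For the ellipse `t²/σ² + σ²(ω − βt)² = C` with `0 < σ < 1` and `β > 0`, the slope
of the major axis, `tan θ = 2β/(σ²(√(A²σ⁴ + 4β²) + Aσ²)) + β` with `A = 1 + β² − 1/σ⁴`,
satisfies `tan θ ≥ √(1/σ⁴ − 1)`. -/
theorem ellipse_slope_lower_bound (C σ β : ℝ) (hC : 0 < C) (hσ0 : 0 < σ) (hσ1 : σ < 1)
    (hβ : 0 < β) (A : ℝ) (hA : A = 1 + β ^ 2 - 1 / σ ^ 4) :
    Real.sqrt (1 / σ ^ 4 - 1) ≤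
      2 * β / (σ ^ 2 * (Real.sqrt (A ^ 2 * σ ^ 4 + 4 * β ^ 2) + A * σ ^ 2)) + β :=
  ellipse_slope_lower_bound_general σ β hσ0 hσ1 hβ A hA
end

section
/- Let σ > 0, β ∈ ℝ, and define σ̂² = (1 + σ²β²)/(σ(1 + β²)) and β̂ = β(1 − σ²)/(1 + σ²β²). Let Â = 1 + β̂² − 1/σ̂⁴. If σ < 1, then Âσ̂² = (1 − σ²)(1 − β²σ²)/(σ(1 + σ²β²)) and √(Â²σ̂⁴ + 4β̂²) = (1 − σ²)/σ. -/
/-- Let `σ > 0`, `β ∈ ℝ`, `σ̂² = (1 + σ²β²)/(σ(1 + β²))`, `β̂ = β(1 − σ²)/(1 + σ²β²)`,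
`Â = 1 + β̂² − 1/σ̂⁴`. If `σ < 1` then
`Âσ̂² = (1 − σ²)(1 − β²σ²)/(σ(1 + σ²β²))` and `√(Â²σ̂⁴ + 4β̂²) = (1 − σ²)/σ`. -/
theorem rotated_window_identities (σ β : ℝ) (hσ0 : 0 < σ) (hσ1 : σ < 1)
    (s βh Ah : ℝ)
    (hs : s = (1 + σ ^ 2 * β ^ 2) / (σ * (1 + β ^ 2)))
    (hβh : βh = β * (1 - σ ^ 2) / (1 + σ ^ 2 * β ^ 2))
    (hAh : Ah = 1 + βh ^ 2 - 1 / s ^ 2) :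
    Ah * s = (1 - σ ^ 2) * (1 - β ^ 2 * σ ^ 2) / (σ * (1 + σ ^ 2 * β ^ 2)) ∧
    Real.sqrt (Ah ^ 2 * s ^ 2 + 4 * βh ^ 2) = (1 - σ ^ 2) / σ := by
  have h1 : (0:ℝ) < 1 + σ ^ 2 * β ^ 2 := by positivity
  have h2 : (0:ℝ) < 1 + β ^ 2 := by positivity
  have hσ : σ ≠ 0 := ne_of_gt hσ0
  have h1' : (1:ℝ) + σ ^ 2 * β ^ 2 ≠ 0 := ne_of_gt h1
  have h2' : (1:ℝ) + β ^ 2 ≠ 0 := ne_of_gt h2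
  have hsne : s ≠ 0 := by
    rw [hs]; positivity
  have hfirst : Ah * s = (1 - σ ^ 2) * (1 - β ^ 2 * σ ^ 2) / (σ * (1 + σ ^ 2 * β ^ 2)) := by
    subst hAh hβh hs
    field_simp
    ring
  refine ⟨hfirst, ?_⟩
  have key : Ah ^ 2 * s ^ 2 + 4 * βh ^ 2 = ((1 - σ ^ 2) / σ) ^ 2 := by
    have hAs2 : Ah ^ 2 * s ^ 2 = (Ah * s) ^ 2 := by ring
    rw [hAs2, hfirst, hβh]
    field_simp
    ring
  rw [key, Real.sqrt_sq (div_nonneg (by nlinarith) hσ0.le)]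
end

section
/- Let σ > 0, β ∈ ℝ, C > 0, and define σ̂² = (1 + σ²β²)/(σ(1 + β²)), β̂ = β(1 − σ²)/(1 + σ²β²), Â = 1 + β̂² − 1/σ̂⁴. Then the quantity L_l = C(Âσ̂² + 2/σ̂² + √(Â²σ̂⁴ + 4β̂²)) equals 2C/σ if σ < 1, and equals 2Cσ if σ ≥ 1. -/
/-- With `σ̂² = (1 + σ²β²)/(σ(1 + β²))`, `β̂ = β(1 − σ²)/(1 + σ²β²)`,
`Â = 1 + β̂² − 1/σ̂⁴`, the quantity `L_l = C(Âσ̂² + 2/σ̂² + √(Â²σ̂⁴ + 4β̂²))`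
equals `2C/σ` if `σ < 1`, and `2Cσ` if `σ ≥ 1`. -/
theorem rotated_window_long_axis (σ β C : ℝ) (hσ0 : 0 < σ) (hC : 0 < C)
    (s βh Ah : ℝ)
    (hs : s = (1 + σ ^ 2 * β ^ 2) / (σ * (1 + β ^ 2)))
    (hβh : βh = β * (1 - σ ^ 2) / (1 + σ ^ 2 * β ^ 2))
    (hAh : Ah = 1 + βh ^ 2 - 1 / s ^ 2) :
    (σ < 1 → C * (Ah * s + 2 / s + Real.sqrt (Ah ^ 2 * s ^ 2 + 4 * βh ^ 2)) = 2 * C / σ) ∧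
    (1 ≤ σ → C * (Ah * s + 2 / s + Real.sqrt (Ah ^ 2 * s ^ 2 + 4 * βh ^ 2)) = 2 * C * σ) := by
  have hd1 : (0:ℝ) < 1 + β ^ 2 := by positivity
  have hd2 : (0:ℝ) < 1 + σ ^ 2 * β ^ 2 := by positivity
  have hσ : σ ≠ 0 := ne_of_gt hσ0
  have hs0 : 0 < s := by rw [hs]; positivity
  have hsne : s ≠ 0 := ne_of_gt hs0
  have h1 : Ah * s + 2 / s = σ + 1 / σ := by
    subst hAh hβh hs
    field_simp
    ring
  have h2 : Ah ^ 2 * s ^ 2 + 4 * βh ^ 2 = ((1 - σ ^ 2) / σ) ^ 2 := by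
    subst hAh hβh hs
    field_simp
    ring
  have h3 : Real.sqrt (Ah ^ 2 * s ^ 2 + 4 * βh ^ 2) = |1 - σ ^ 2| / σ := by
    rw [h2, Real.sqrt_sq_eq_abs, abs_div, abs_of_pos hσ0]
  constructor
  · intro hlt
    have : |1 - σ ^ 2| = 1 - σ ^ 2 := by
      apply abs_of_nonneg; nlinarith
    rw [h1, h3, this]
    field_simp
    ring
  · intro hge
    have : |1 - σ ^ 2| = σ ^ 2 - 1 := by
      rw [abs_of_nonpos (by nlinarith)]; ring
    rw [h1, h3, this]
    field_simp
    ring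
end

section
/- Let σ > 0 with σ < 1, β > 0, and define σ̂² = (1 + σ²β²)/(σ(1 + β²)), β̂ = β(1 − σ²)/(1 + σ²β²), Â = 1 + β̂² − 1/σ̂⁴. Then 2β̂/(σ̂²(√(Â²σ̂⁴ + 4β̂²) + Âσ̂²)) + β̂ = β. -/
/-!
Writing `d = β - β̂`, the slope `2β̂ / (σ̂² (√(Â²σ̂⁴ + 4β̂²) + Âσ̂²))` is `t / σ̂²`, where
`t = 2β̂ / (p + √(p² + 4β̂²))` with `p = Âσ̂²` is the positive root of `β̂ t² + p t = β̂`.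
The parameters satisfy `σ̂⁴ (β - β̂)(1 + β β̂) = β`, which says exactly that `t = σ̂² d` is a root,
so the slope is `d + β̂ = β`. For `σ < 1` both `β̂` and `d` are positive, so this root is the one
the formula selects.
-/

theorem two_mul_div_add_sqrt_eq_of_mul_sq_add_mul_eq {c p t : ℝ} (hc : 0 < c) (ht : 0 < t)
    (h : c * t ^ 2 + p * t = c) : 2 * c / (p + √(p ^ 2 + 4 * c ^ 2)) = t := by
  have hpc : 0 < p + c * t := by
    refine pos_of_mul_pos_right (a := t) ?_ ht.le
    rwa [show t * (p + c * t) = c by linear_combination h]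
  have hroot : 0 < p + 2 * c * t := by linarith [mul_pos hc ht]
  have hsq : p ^ 2 + 4 * c ^ 2 = (p + 2 * c * t) ^ 2 := by
    linear_combination (4 * c) * h.symm
  rw [hsq, Real.sqrt_sq hroot.le, div_eq_iff (by linarith)]
  linear_combination -2 * h

theorem rotatedWindow_param_identity {σ β s βh : ℝ} (hσ : σ ≠ 0)
    (hs : s = (1 + σ ^ 2 * β ^ 2) / (σ * (1 + β ^ 2)))
    (hβh : βh = β * (1 - σ ^ 2) / (1 + σ ^ 2 * β ^ 2)) :
    s ^ 2 * ((β - βh) * (1 + β * βh)) = β := by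
  subst hs hβh
  field_simp
  ring

/-- For `0 < σ < 1` and `β > 0`, with `σ̂² = (1 + σ²β²)/(σ(1 + β²))`,
`β̂ = β(1 − σ²)/(1 + σ²β²)`, `Â = 1 + β̂² − 1/σ̂⁴`, the major-axis slope
`2β̂/(σ̂²(√(Â²σ̂⁴ + 4β̂²) + Âσ̂²)) + β̂` equals `β`. -/
theorem rotated_window_slope_lt_one (σ β : ℝ) (hσ0 : 0 < σ) (hσ1 : σ < 1) (hβ : 0 < β)
    (s βh Ah : ℝ)
    (hs : s = (1 + σ ^ 2 * β ^ 2) / (σ * (1 + β ^ 2)))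
    (hβh : βh = β * (1 - σ ^ 2) / (1 + σ ^ 2 * β ^ 2))
    (hAh : Ah = 1 + βh ^ 2 - 1 / s ^ 2) :
    2 * βh / (s * (Real.sqrt (Ah ^ 2 * s ^ 2 + 4 * βh ^ 2) + Ah * s)) + βh = β := by
  have hs0 : 0 < s := by rw [hs]; positivity
  have hβh0 : 0 < βh := by
    rw [hβh]
    have : 0 < 1 - σ ^ 2 := by nlinarith
    positivity
  have hd0 : 0 < β - βh := by
    have : β - βh = σ ^ 2 * β * (1 + β ^ 2) / (1 + σ ^ 2 * β ^ 2) := by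
      rw [hβh]; field_simp; ring
    rw [this]; positivity
  have hroot : βh * (s * (β - βh)) ^ 2 + Ah * s * (s * (β - βh)) = βh := by
    rw [hAh]
    field_simp
    linear_combination rotatedWindow_param_identity hσ0.ne' hs hβh
  have hslope := two_mul_div_add_sqrt_eq_of_mul_sq_add_mul_eq hβh0 (by positivity) hroot
  calc 2 * βh / (s * (√(Ah ^ 2 * s ^ 2 + 4 * βh ^ 2) + Ah * s)) + βh
      = 2 * βh / (Ah * s + √((Ah * s) ^ 2 + 4 * βh ^ 2)) / s + βh := by
        rw [mul_pow, div_div, add_comm (Ah * s), mul_comm s]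
    _ = β := by rw [hslope]; field_simp; ring
end

section
/- Let σ > 1, β > 0, and define σ̂² = (1 + σ²β²)/(σ(1 + β²)), β̂ = β(1 − σ²)/(1 + σ²β²), Â = 1 + β̂² − 1/σ̂⁴. Then 2β̂/(σ̂²(√(Â²σ̂⁴ + 4β̂²) + Âσ̂²)) + β̂ = −1/β. -/
/-- For `σ > 1` and `β > 0`, with `σ̂² = (1 + σ²β²)/(σ(1 + β²))`,
`β̂ = β(1 − σ²)/(1 + σ²β²)`, `Â = 1 + β̂² − 1/σ̂⁴`, the major-axis slope
`2β̂/(σ̂²(√(Â²σ̂⁴ + 4β̂²) + Âσ̂²)) + β̂` equals `−1/β`. -/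
theorem rotated_window_slope_gt_one (σ β : ℝ) (hσ1 : 1 < σ) (hβ : 0 < β)
    (s βh Ah : ℝ)
    (hs : s = (1 + σ ^ 2 * β ^ 2) / (σ * (1 + β ^ 2)))
    (hβh : βh = β * (1 - σ ^ 2) / (1 + σ ^ 2 * β ^ 2))
    (hAh : Ah = 1 + βh ^ 2 - 1 / s ^ 2) :
    2 * βh / (s * (Real.sqrt (Ah ^ 2 * s ^ 2 + 4 * βh ^ 2) + Ah * s)) + βh = -(1 / β) := by
  have hσ0 : (0:ℝ) < σ := lt_trans one_pos hσ1
  have hP : (0:ℝ) < 1 + σ ^ 2 * β ^ 2 := by positivity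
  have hQ : (0:ℝ) < 1 + β ^ 2 := by positivity
  have hs0 : 0 < s := by rw [hs]; positivity
  have hsqrt : Real.sqrt (Ah ^ 2 * s ^ 2 + 4 * βh ^ 2) = (σ ^ 2 - 1) / σ := by
    have harg : Ah ^ 2 * s ^ 2 + 4 * βh ^ 2 = ((σ ^ 2 - 1) / σ) ^ 2 := by
      subst hAh hβh hs
      field_simp
      ring
    rw [harg, Real.sqrt_sq (div_nonneg (by nlinarith) hσ0.le)]
  rw [hsqrt]
  have hE : (σ ^ 2 - 1) / σ + Ah * s = 2 * σ * β ^ 2 * (σ ^ 2 - 1) / (1 + σ ^ 2 * β ^ 2) := by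
    subst hAh hβh hs
    field_simp
    ring
  rw [hE]
  have hE0 : (0:ℝ) < 2 * σ * β ^ 2 * (σ ^ 2 - 1) / (1 + σ ^ 2 * β ^ 2) := by
    have : (0:ℝ) < σ ^ 2 - 1 := by nlinarith
    positivity
  have h21 : σ ^ 2 - 1 ≠ 0 := by nlinarith
  subst hβh hs
  field_simp [hβ.ne', hσ0.ne', hP.ne', hQ.ne', h21]
  ring
end

section
/- Let f(t) = A e^{j(at + bt²/2)} be a linear chirp with A > 0 and a, b ∈ ℝ. Then the chirplet transform of f with the chirp-modulated Gaussian window, with CR parameter β and variance σ, equals f(t) · √(√(2π)σ/(1 + jσ²(β − b))) · exp(−σ²(ω − a − bt)²/(2(1 + jσ²(β − b)))). -/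
/-!
Substituting `μ = t + x`, a linear chirp factors as `f (t + x) = f t · e^{i(a + bt)x} · e^{ibx²/2}`,
so the windowed integrand is `f t` times the complex Gaussian `e^{-zx²} e^{-icx}` with
`z = (1 + iσ²(β − b)) / (2σ²)` and `c = ω − a − bt`, whose integral is `√(π/z) e^{−c²/(4z)}`.
Since `π / z = s · (s / (1 + iσ²(β − b)))` with `s = √(2π) σ > 0`, the real factor `√s`
splits off the principal square root and cancels the normalisation `1 / √s`.
-/

open MeasureTheory Complex

namespace Complex

theorem ofReal_mul_cpow {r : ℝ} (hr : 0 < r) (z w : ℂ) :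
    ((r : ℂ) * z) ^ w = (r : ℂ) ^ w * z ^ w := by
  rcases eq_or_ne z 0 with rfl | hz
  · rcases eq_or_ne w 0 with rfl | hw <;> simp [*]
  have hr' : (r : ℂ) ≠ 0 := ofReal_ne_zero.mpr hr.ne'
  rw [cpow_def_of_ne_zero (mul_ne_zero hr' hz), cpow_def_of_ne_zero hr', cpow_def_of_ne_zero hz,
    log_ofReal_mul hr hz, ← ofReal_log hr.le, add_mul, exp_add]

theorem ofReal_cpow_one_div_two {r : ℝ} (hr : 0 ≤ r) : (r : ℂ) ^ (1 / 2 : ℂ) = Real.sqrt r := by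
  rw [Real.sqrt_eq_rpow, ofReal_cpow hr]
  norm_num

theorem integral_cexp_neg_mul_sq_mul_cexp_neg_I_mul {z : ℂ} (hz : 0 < z.re) (c : ℂ) :
    ∫ x : ℝ, cexp (-z * x ^ 2) * cexp (-I * c * x) =
      (Real.pi / z) ^ (1 / 2 : ℂ) * cexp (-c ^ 2 / (4 * z)) := by
  simpa [mul_comm] using fourierIntegral_gaussian hz (-c)

end Complex

theorem linear_chirp_chirplet_integrand_add (A a b σ β t ω x : ℝ) (hσ : σ ≠ 0) :
    (A : ℂ) * cexp (I * (a * ↑(t + x) + b * ↑(t + x) ^ 2 / 2)) *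
        cexp (-((t : ℂ) - ↑(t + x)) ^ 2 / (2 * (σ : ℂ) ^ 2)) *
        cexp (-I * β * (↑(t + x) - (t : ℂ)) ^ 2 / 2) * cexp (-I * ω * (↑(t + x) - (t : ℂ))) =
      (A : ℂ) * cexp (I * (a * t + b * t ^ 2 / 2)) *
        (cexp (-((1 + I * σ ^ 2 * (β - b)) / (2 * σ ^ 2)) * x ^ 2) *
          cexp (-I * (ω - a - b * t) * x)) := by
  have hσ' : (σ : ℂ) ≠ 0 := ofReal_ne_zero.mpr hσ
  simp only [mul_assoc, ← Complex.exp_add]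
  congr 2
  push_cast
  field_simp
  ring

theorem integral_gaussian_div_two_sq_mul_cexp_neg_I_mul {σ : ℝ} (hσ : 0 < σ) {D : ℂ}
    (hD : 0 < D.re) (c : ℂ) :
    ∫ x : ℝ, cexp (-(D / (2 * σ ^ 2)) * x ^ 2) * cexp (-I * c * x) =
      Real.sqrt (Real.sqrt (2 * Real.pi) * σ) *
        ((Real.sqrt (2 * Real.pi) * σ : ℝ) / D) ^ (1 / 2 : ℂ) *
        cexp (-σ ^ 2 * c ^ 2 / (2 * D)) := by
  set s : ℝ := Real.sqrt (2 * Real.pi) * σ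
  have hs : 0 < s := by positivity
  have hσ' : (σ : ℂ) ≠ 0 := ofReal_ne_zero.mpr hσ.ne'
  have hD0 : D ≠ 0 := by
    rintro rfl
    simp at hD
  have hz : 0 < (D / (2 * σ ^ 2)).re := by
    rw [← ofReal_ofNat, ← ofReal_pow, ← ofReal_mul, div_ofReal_re]
    positivity
  have hpi : (Real.pi : ℂ) / (D / (2 * σ ^ 2)) = s * (s / D) := by
    have hs2 : (s : ℂ) ^ 2 = 2 * Real.pi * σ ^ 2 := by
      norm_cast
      rw [mul_pow, Real.sq_sqrt (by positivity)]
    rw [mul_div_assoc', ← sq, hs2, div_div_eq_mul_div]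
    ring
  have hexp : -c ^ 2 / (4 * (D / (2 * σ ^ 2))) = -σ ^ 2 * c ^ 2 / (2 * D) := by
    field_simp
    ring
  rw [integral_cexp_neg_mul_sq_mul_cexp_neg_I_mul hz, hpi, ofReal_mul_cpow hs,
    ofReal_cpow_one_div_two hs.le, hexp]

theorem chirplet_of_linear_chirp_general (A a b σ β : ℝ) (hσ : 0 < σ)
    (f : ℝ → ℂ)
    (hf : ∀ x : ℝ, f x = (A : ℂ) * Complex.exp (Complex.I * (a * x + b * x ^ 2 / 2))) :
    ∀ t ω : ℝ,
      ((1 / Real.sqrt (Real.sqrt (2 * Real.pi) * σ) : ℝ) : ℂ) *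
        (∫ μ : ℝ, f μ * Complex.exp (-((t : ℂ) - μ) ^ 2 / (2 * (σ : ℂ) ^ 2)) *
          Complex.exp (-Complex.I * β * ((μ : ℂ) - t) ^ 2 / 2) *
          Complex.exp (-Complex.I * ω * ((μ : ℂ) - t))) =
      f t * ((Real.sqrt (2 * Real.pi) * σ : ℂ) /
          (1 + Complex.I * σ ^ 2 * (β - b))) ^ ((1 : ℂ) / 2) *
        Complex.exp (-(σ : ℂ) ^ 2 * ((ω : ℂ) - a - b * t) ^ 2 /
          (2 * (1 + Complex.I * σ ^ 2 * (β - b)))) := by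
  intro t ω
  have hD : 0 < (1 + I * σ ^ 2 * (β - b)).re := by simp [← ofReal_pow]
  have hsqrt : (Real.sqrt (Real.sqrt (2 * Real.pi) * σ) : ℂ) ≠ 0 :=
    ofReal_ne_zero.mpr (Real.sqrt_pos.mpr (by positivity)).ne'
  rw [← integral_add_left_eq_self _ t]
  simp only [hf, linear_chirp_chirplet_integrand_add A a b σ β t ω _ hσ.ne']
  rw [integral_const_mul, integral_gaussian_div_two_sq_mul_cexp_neg_I_mul hσ hD, ← hf t]
  push_cast
  field_simp

/-- Closed form of the chirplet transform of a linear chirp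
`f(t) = A e^{i(at + bt²/2)}` with chirp-modulated Gaussian window:
`C_f(t,ω) = f(t) √(√(2π)σ/(1 + iσ²(β−b))) exp(−σ²(ω−a−bt)²/(2(1 + iσ²(β−b))))`. -/
theorem chirplet_of_linear_chirp (A a b σ β : ℝ) (hA : 0 < A) (hσ : 0 < σ)
    (f : ℝ → ℂ)
    (hf : ∀ x : ℝ, f x = (A : ℂ) * Complex.exp (Complex.I * (a * x + b * x ^ 2 / 2))) :
    ∀ t ω : ℝ,
      ((1 / Real.sqrt (Real.sqrt (2 * Real.pi) * σ) : ℝ) : ℂ) *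
        (∫ μ : ℝ, f μ * Complex.exp (-((t : ℂ) - μ) ^ 2 / (2 * (σ : ℂ) ^ 2)) *
          Complex.exp (-Complex.I * β * ((μ : ℂ) - t) ^ 2 / 2) *
          Complex.exp (-Complex.I * ω * ((μ : ℂ) - t))) =
      f t * ((Real.sqrt (2 * Real.pi) * σ : ℂ) /
          (1 + Complex.I * σ ^ 2 * (β - b))) ^ ((1 : ℂ) / 2) *
        Complex.exp (-(σ : ℂ) ^ 2 * ((ω : ℂ) - a - b * t) ^ 2 /
          (2 * (1 + Complex.I * σ ^ 2 * (β - b)))) :=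
  chirplet_of_linear_chirp_general A a b σ β hσ f hf
end

section
/- There do not exist σ > 0 achieving simultaneously the same time resolution and the same frequency resolution as the combined transform: for σ₁ ≠ σ₂ positive, if σ² = (σ₁² + σ₂²)/2 (equal frequency resolution) then the combined time spread √2σ₁σ₂/√(σ₁²+σ₂²) < σ (strictly better time resolution); and if σ equals the combined time spread √2σ₁σ₂/√(σ₁²+σ₂²) then σ² < (σ₁²+σ₂²)/2 (strictly better frequency resolution for the combined transform). -/
lemma combined_sq (σ₁ σ₂ : ℝ) (h₁ : 0 < σ₁) (h₂ : 0 < σ₂) :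
    (Real.sqrt 2 * σ₁ * σ₂ / Real.sqrt (σ₁ ^ 2 + σ₂ ^ 2)) ^ 2
      = 2 * σ₁ ^ 2 * σ₂ ^ 2 / (σ₁ ^ 2 + σ₂ ^ 2) := by
  have hs : (0:ℝ) < σ₁ ^ 2 + σ₂ ^ 2 := by positivity
  rw [div_pow, mul_pow, mul_pow, Real.sq_sqrt (by norm_num), Real.sq_sqrt hs.le]

lemma key_lt (σ₁ σ₂ : ℝ) (h₁ : 0 < σ₁) (h₂ : 0 < σ₂) (hne : σ₁ ≠ σ₂) :
    2 * σ₁ ^ 2 * σ₂ ^ 2 / (σ₁ ^ 2 + σ₂ ^ 2) < (σ₁ ^ 2 + σ₂ ^ 2) / 2 := by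
  have hs : (0:ℝ) < σ₁ ^ 2 + σ₂ ^ 2 := by positivity
  rw [div_lt_div_iff₀ hs (by norm_num)]
  have hd : σ₁ - σ₂ ≠ 0 := sub_ne_zero.mpr hne
  have hp : 0 < (σ₁ - σ₂) ^ 2 := pow_two_pos_of_ne_zero hd
  have hp2 : 0 < (σ₁ + σ₂) ^ 2 := by positivity
  nlinarith [mul_pos hp hp2]

/-- No single window `σ > 0` matches both resolutions of the combined transform:
if `σ² = (σ₁² + σ₂²)/2` (equal frequency resolution) then the combined time spread
`√2σ₁σ₂/√(σ₁²+σ₂²)` is strictly smaller than `σ`; and if `σ` equals the combined time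
spread then `σ² < (σ₁²+σ₂²)/2`. -/
theorem no_single_window_matches_combined (σ₁ σ₂ : ℝ) (h₁ : 0 < σ₁) (h₂ : 0 < σ₂)
    (hne : σ₁ ≠ σ₂) :
    (∀ σ : ℝ, 0 < σ → σ ^ 2 = (σ₁ ^ 2 + σ₂ ^ 2) / 2 →
      Real.sqrt 2 * σ₁ * σ₂ / Real.sqrt (σ₁ ^ 2 + σ₂ ^ 2) < σ) ∧
    (∀ σ : ℝ, 0 < σ → σ = Real.sqrt 2 * σ₁ * σ₂ / Real.sqrt (σ₁ ^ 2 + σ₂ ^ 2) →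
      σ ^ 2 < (σ₁ ^ 2 + σ₂ ^ 2) / 2) := by
  have hsq := combined_sq σ₁ σ₂ h₁ h₂
  have hkey := key_lt σ₁ σ₂ h₁ h₂ hne
  constructor
  · intro σ hσ hfreq
    have : (Real.sqrt 2 * σ₁ * σ₂ / Real.sqrt (σ₁ ^ 2 + σ₂ ^ 2)) ^ 2 < σ ^ 2 := by
      rw [hsq, hfreq]; exact hkey
    have hnn : 0 ≤ Real.sqrt 2 * σ₁ * σ₂ / Real.sqrt (σ₁ ^ 2 + σ₂ ^ 2) := by positivity
    exact lt_of_pow_lt_pow_left₀ 2 hσ.le this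
  · intro σ hσ heq
    rw [heq, hsq]; exact hkey
end
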